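/- arXiv:math/0602534 — 5 statements merged into one kernel-verified Lean document; each statement's English description precedes it below -/
import Mathlib

section
/- For all integers l and j with 2 ≤ l ≤ j, one has σ_{l,j+1} = −2·σ_{l,j}. -/
/-!
Write `B_j(p) = ∑_{q ≤ p} (-1)^q C(j,q) (p-q)^d` with `d = l - 1`, so that
`σ_{l,j} = (-1)^(j-1) ∑_{p < j-1} (-1)^(p+1) B_j(p+1)`. Pascal's rule gives
`B_{j+1}(p+1) = B_j(p+1) - B_j(p)`, and summing this against alternating signs produces twice the
sum defining `σ_{l,j}` plus the boundary terms `B_j(0) = 0^d` and `B_j(j)`, the `j`-th forward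
difference of `x ↦ x^d` at `0`. Both vanish because `1 ≤ d < j`.
-/

open Finset

/-- The coefficient `σ_{l,j}` from the paper (there written `σ_{l,i+1}` with `j = i+1`):
`σ_{l,j} = (-1)^{j-1} Σ_{p=0}^{j-2} (-1)^{p+1} Σ_{q=0}^{p+1} (-1)^q C(j,q)(p+1-q)^{l-1}`. -/
def sigmaCoeff (l j : ℕ) : ℚ :=
  (-1) ^ (j - 1) * ∑ p ∈ Finset.range (j - 1), (-1 : ℚ) ^ (p + 1) *
    ∑ q ∈ Finset.range (p + 2), (-1 : ℚ) ^ q * (j.choose q : ℚ) * ((p + 1 - q : ℕ) : ℚ) ^ (l - 1)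

/-- The coefficient `χ_{l,j}` from the paper (there written `χ_{l,i+1}` with `j = i+1`):
`χ_{l,j} = (-1)^{j-l} Σ_{k=1}^{j-1} ((2^{j-1}-2^{j-1-k})/(k+1)) Σ_{m=0}^{k+1} (-1)^m C(k+1,m) m^l`. -/
def chiCoeff (l j : ℕ) : ℚ :=
  (-1) ^ (j - l) * ∑ k ∈ Finset.Icc 1 (j - 1),
    ((2 ^ (j - 1) - 2 ^ (j - 1 - k) : ℚ) / ((k : ℚ) + 1)) *
      ∑ m ∈ Finset.range (k + 2), (-1 : ℚ) ^ m * ((k + 1).choose m : ℚ) * (m : ℚ) ^ l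

theorem sum_range_neg_one_pow_mul_choose_mul_pow_eq_zero {R : Type*} [CommRing R] {d n : ℕ}
    (h : d < n) :
    ∑ q ∈ range (n + 1), (-1 : R) ^ q * n.choose q * ((n - q : ℕ) : R) ^ d = 0 := by
  have hΔ := fwdDiff_iter_eq_sum_shift (1 : R) (fun x ↦ x ^ d) n 0
  rw [fwdDiff_iter_pow_eq_zero_of_lt h] at hΔ
  rw [← sum_range_reflect]
  refine Eq.trans (sum_congr rfl fun q hq ↦ ?_) hΔ.symm
  have hq : q ≤ n := Nat.lt_succ_iff.mp (mem_range.mp hq)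
  simp [Nat.sub_sub_self hq, Nat.choose_symm hq, zsmul_eq_mul]

theorem sum_range_neg_one_pow_mul_sub {R : Type*} [CommRing R] (f : ℕ → R) (m : ℕ) :
    ∑ p ∈ range (m + 1), (-1 : R) ^ (p + 1) * (f (p + 1) - f p)
      = 2 * ∑ p ∈ range m, (-1 : R) ^ (p + 1) * f (p + 1) + (-1) ^ (m + 1) * f (m + 1) + f 0 := by
  induction m with
  | zero => rw [sum_range_one, range_zero, sum_empty]; ring
  | succ m ih => rw [sum_range_succ, ih, sum_range_succ]; ring

def sigmaTerm (d j p : ℕ) : ℚ :=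
  ∑ q ∈ range (p + 1), (-1 : ℚ) ^ q * j.choose q * ((p - q : ℕ) : ℚ) ^ d

theorem sigmaCoeff_eq_sum_sigmaTerm (l j : ℕ) :
    sigmaCoeff l j
      = (-1) ^ (j - 1) * ∑ p ∈ range (j - 1), (-1) ^ (p + 1) * sigmaTerm (l - 1) j (p + 1) :=
  rfl

theorem sigmaTerm_zero {d : ℕ} (hd : d ≠ 0) (j : ℕ) : sigmaTerm d j 0 = 0 := by
  simp [sigmaTerm, hd]

theorem sigmaTerm_self {d j : ℕ} (h : d < j) : sigmaTerm d j j = 0 :=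
  sum_range_neg_one_pow_mul_choose_mul_pow_eq_zero h

theorem sigmaTerm_succ_succ (d j p : ℕ) :
    sigmaTerm d (j + 1) (p + 1) = sigmaTerm d j (p + 1) - sigmaTerm d j p := by
  simp only [sigmaTerm]
  rw [sum_range_succ' _ (p + 1), sum_range_succ' _ (p + 1)]
  simp only [Nat.choose_succ_succ', Nat.succ_sub_succ, Nat.choose_zero_right, Nat.cast_add,
    mul_add, add_mul, sum_add_distrib, pow_succ, mul_neg_one, neg_mul, sum_neg_distrib]
  ring

/-- Lemma `sigchirec`, first equality: `σ_{l,j+1} = -2 σ_{l,j}` for `2 ≤ l ≤ j`. -/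
theorem sigma_rec (l j : ℕ) (hl : 2 ≤ l) (hj : l ≤ j) :
    sigmaCoeff l (j + 1) = -2 * sigmaCoeff l j := by
  obtain ⟨m, rfl⟩ : ∃ m, j = m + 1 := ⟨j - 1, by omega⟩
  simp only [sigmaCoeff_eq_sum_sigmaTerm, Nat.add_sub_cancel]
  simp_rw [sigmaTerm_succ_succ (l - 1) (m + 1)]
  rw [sum_range_neg_one_pow_mul_sub, sigmaTerm_self (by omega), sigmaTerm_zero (by omega)]
  ring
end

section
/- For all integers l and j with 2 ≤ l ≤ j, one has χ_{l,j+1} = −2·χ_{l,j}. -/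
open Finset

open Function in
/-- The `n`-th forward difference of `x ↦ x^l` vanishes when `l < n`. -/
lemma fwdDiff_pow_eq_zero : ∀ l n : ℕ, l < n →
    ∀ y : ℕ, (fwdDiff (1:ℕ))^[n] (fun x : ℕ ↦ (x : ℚ) ^ l) y = 0 := by
  intro l
  induction l using Nat.strong_induction_on with
  | _ l IH =>
    intro n hn y
    obtain ⟨m, rfl⟩ : ∃ m, n = m + 1 := ⟨n - 1, by omega⟩
    rw [iterate_succ_apply]
    have hΔ : fwdDiff (1:ℕ) (fun x : ℕ ↦ (x : ℚ) ^ l)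
        = ∑ i ∈ range l, (l.choose i : ℚ) • (fun x : ℕ ↦ (x : ℚ) ^ i) := by
      funext x
      simp only [fwdDiff, Finset.sum_apply, Pi.smul_apply, smul_eq_mul]
      push_cast
      rw [add_pow, Finset.sum_range_succ]
      simp [mul_comm]
    rw [hΔ, fwdDiff_iter_finset_sum, Finset.sum_apply]
    apply Finset.sum_eq_zero
    intro i hi
    rw [fwdDiff_iter_const_smul]
    simp only [Pi.smul_apply, smul_eq_mul]
    rw [IH i (Finset.mem_range.mp hi) m (by have := Finset.mem_range.mp hi; omega) y, mul_zero]

/-- The alternating binomial sum `∑ (-1)^m C(n,m) m^l` vanishes for `l < n`. -/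
lemma alt_sum_zero (n l : ℕ) (h : l < n) :
    ∑ m ∈ Finset.range (n + 1), (-1 : ℚ) ^ m * (n.choose m : ℚ) * (m : ℚ) ^ l = 0 := by
  have h0 := fwdDiff_iter_eq_sum_shift (1 : ℕ) (fun x : ℕ ↦ (x : ℚ) ^ l) n 0
  rw [fwdDiff_pow_eq_zero l n h 0] at h0
  have h1 : (0:ℚ) = ∑ k ∈ Finset.range (n + 1), (-1 : ℚ) ^ (n - k) * (n.choose k : ℚ) * (k : ℚ) ^ l := by
    rw [h0]
    apply Finset.sum_congr rfl
    intro k _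
    simp only [zsmul_eq_mul, zero_add, smul_eq_mul, mul_one, Int.cast_mul, Int.cast_pow,
      Int.cast_neg, Int.cast_one, Int.cast_natCast, Nat.cast_id]
  have h2 : ∀ k ∈ Finset.range (n+1), (-1:ℚ)^n * ((-1 : ℚ) ^ (n - k) * (n.choose k : ℚ) * (k : ℚ) ^ l)
      = (-1 : ℚ) ^ k * (n.choose k : ℚ) * (k : ℚ) ^ l := by
    intro k hk
    have hk' : k ≤ n := by have := Finset.mem_range.mp hk; omega
    have : (-1:ℚ)^n * (-1:ℚ)^(n-k) = (-1:ℚ)^k := by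
      rw [← pow_add, show n + (n - k) = k + 2 * (n - k) from by omega, pow_add, pow_mul]
      simp
    rw [← mul_assoc, ← mul_assoc, this]
  rw [← Finset.sum_congr rfl h2, ← Finset.mul_sum, ← h1, mul_zero]

/-- Lemma `sigchirec`, second equality: `χ_{l,j+1} = -2 χ_{l,j}` for `2 ≤ l ≤ j`. -/
theorem chi_rec (l j : ℕ) (hl : 2 ≤ l) (hj : l ≤ j) :
    chiCoeff l (j + 1) = -2 * chiCoeff l j := by
  obtain ⟨b, rfl⟩ : ∃ b, j = b + 1 := ⟨j - 1, by omega⟩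
  unfold chiCoeff
  rw [show b + 1 + 1 - 1 = b + 1 from rfl, show b + 1 - 1 = b from rfl]
  rw [Finset.sum_Icc_succ_top (by omega : (1:ℕ) ≤ b + 1)]
  have hz : (∑ m ∈ Finset.range (b + 1 + 2), (-1:ℚ) ^ m * ((b + 1 + 1).choose m : ℚ) * (m:ℚ) ^ l) = 0 := by
    have := alt_sum_zero (b + 2) l (by omega)
    convert this using 2
  rw [hz, mul_zero, add_zero]
  rw [show b + 1 + 1 - l = (b + 1 - l) + 1 from by omega]
  have hsum : (∑ k ∈ Finset.Icc 1 b, ((2 ^ (b + 1) - 2 ^ (b + 1 - k) : ℚ) / ((k : ℚ) + 1)) *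
        ∑ m ∈ Finset.range (k + 2), (-1 : ℚ) ^ m * ((k + 1).choose m : ℚ) * (m : ℚ) ^ l)
      = 2 * ∑ k ∈ Finset.Icc 1 b, ((2 ^ b - 2 ^ (b - k) : ℚ) / ((k : ℚ) + 1)) *
        ∑ m ∈ Finset.range (k + 2), (-1 : ℚ) ^ m * ((k + 1).choose m : ℚ) * (m : ℚ) ^ l := by
    rw [Finset.mul_sum]
    apply Finset.sum_congr rfl
    intro k hk
    have hk' : k ≤ b := (Finset.mem_Icc.mp hk).2
    rw [show b + 1 - k = (b - k) + 1 from by omega, pow_succ, pow_succ]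
    ring
  rw [hsum, pow_succ]
  ring
end

section
/- For all integers l and j with 2 ≤ l ≤ j, one has χ_{l,j} = σ_{l,j}. -/
/-!
Write `l = m + 1` and `T_m(k) = Σ_r (-1)^r C(k,r) r^m = (-1)^k Δ^k x^m (0)`. It vanishes for
`k > m`, and the Leibniz rule for `Δ` gives `T_{m+1}(k+1) = (k+1)(T_m(k+1) - T_m(k))`. This
cancels the denominators of `χ_{l,j}`, and Abel summation turns it into `±R_m(j)` with
`R_m(j) = Σ_{0<k<j} 2^{j-1-k} T_m(k)`.

The inner sums of `σ_{l,j}` are backward differences of `t ↦ max(t,0)^m`, so by Pascal's rule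
the alternating sum `L_m(j)` in `σ_{l,j}` obeys the same recurrence `X(j+1) = 2X(j) + T_m(j)` as
`R_m`, whence `L_m = R_m`. For odd `m` the signs of `χ` and `σ` then agree. For even `m` both
vanish: `R_m(j) = 2^{j-m-1} L_m(m+1)` for `j > m`, and `L_m(m+1)` is an alternating sum of an even
number of Eulerian numbers `A(m,n) = A(m,m+1-n)`, which cancel in pairs.
-/

open Finset

open fwdDiff

theorem neg_one_pow_mul_neg_one_pow {R : Type*} [Monoid R] [HasDistribNeg R] (n : ℕ) :
    (-1 : R) ^ n * (-1) ^ n = 1 := by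
  rw [← pow_add, Even.neg_one_pow ⟨n, rfl⟩]

theorem neg_one_pow_sub_of_le {R : Type*} [Monoid R] [HasDistribNeg R] {a b : ℕ} (h : b ≤ a) :
    (-1 : R) ^ (a - b) = (-1) ^ a * (-1) ^ b := by
  obtain ⟨c, rfl⟩ := Nat.exists_eq_add_of_le h
  rw [Nat.add_sub_cancel_left, pow_add, ((Commute.neg_one_left _).pow_pow b c).eq, mul_assoc,
    neg_one_pow_mul_neg_one_pow, mul_one]

theorem sum_range_neg_one_pow_mul_choose_reflect {R : Type*} [CommRing R] (n : ℕ)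
    (g : ℕ → R) :
    ∑ q ∈ range (n + 1), (-1) ^ q * n.choose q * g q
      = (-1) ^ n * ∑ q ∈ range (n + 1), (-1) ^ q * n.choose q * g (n - q) := by
  rw [← sum_range_reflect, mul_sum]
  refine sum_congr rfl fun q hq ↦ ?_
  have hqn : q ≤ n := Nat.le_of_lt_succ (mem_range.1 hq)
  rw [Nat.add_sub_cancel, Nat.choose_symm hqn, neg_one_pow_sub_of_le hqn]
  ring

theorem fwdDiff_iter_succ_id_mul {R : Type*} [CommRing R] (f : R → R) (n : ℕ) (y : R) :
    (Δ_[1])^[n + 1] (fun x ↦ x * f x) y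
      = y * (Δ_[1])^[n + 1] f y + (n + 1) * (Δ_[1])^[n] f (y + 1) := by
  induction n generalizing y with
  | zero =>
    simp only [zero_add, Function.iterate_one, Function.iterate_zero_apply, fwdDiff]
    push_cast
    ring
  | succ n ih =>
    rw [Function.iterate_succ_apply', fwdDiff, ih, ih]
    simp only [Function.iterate_succ_apply', fwdDiff]
    push_cast
    ring

theorem sum_neg_one_pow_mul_choose_mul_eq_fwdDiff_iter {R : Type*} [CommRing R] (f : R → R)
    (n : ℕ) (y : R) :
    ∑ k ∈ range (n + 1), (-1) ^ k * n.choose k * f (y + k) = (-1) ^ n * (Δ_[1])^[n] f y := by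
  rw [fwdDiff_iter_eq_sum_shift, mul_sum]
  refine sum_congr rfl fun k hk ↦ ?_
  rw [neg_one_pow_sub_of_le (Nat.le_of_lt_succ (mem_range.1 hk))]
  simp only [zsmul_eq_mul, nsmul_eq_mul, mul_one]
  push_cast
  linear_combination
    -(-1 : R) ^ k * n.choose k * f (y + k) * neg_one_pow_mul_neg_one_pow (R := R) n

open Polynomial in
theorem sum_neg_one_pow_mul_choose_mul_eval_eq_zero {R : Type*} [CommRing R] {P : R[X]} {n : ℕ}
    (hP : P.natDegree < n) (y : R) :
    ∑ k ∈ range (n + 1), (-1) ^ k * n.choose k * P.eval (y + k) = 0 := by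
  rw [sum_neg_one_pow_mul_choose_mul_eq_fwdDiff_iter (P.eval ·),
    fwdDiff_iter_eq_zero_of_degree_lt hP, Pi.zero_apply, mul_zero]

theorem natCast_sub_pow_eq_add {R : Type*} [Ring R] (a b : ℕ) {m : ℕ} (hm : m ≠ 0) :
    ((a : R) - b) ^ m = ((a - b : ℕ) : R) ^ m + (-1) ^ m * ((b - a : ℕ) : R) ^ m := by
  rcases le_total a b with h | h
  · rw [Nat.sub_eq_zero_of_le h, Nat.cast_sub h, ← neg_sub, neg_pow]
    simp [hm]
  · rw [Nat.sub_eq_zero_of_le h, Nat.cast_sub h]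
    simp [hm]

/-- `altPowSum m k = (-1)^k k! S(m, k)`, with `S` the Stirling numbers of the second kind. -/
def altPowSum (m k : ℕ) : ℚ :=
  ∑ r ∈ range (k + 1), (-1 : ℚ) ^ r * (k.choose r : ℚ) * (r : ℚ) ^ m

theorem altPowSum_eq_fwdDiff_iter (m k : ℕ) :
    altPowSum m k = (-1) ^ k * (Δ_[1])^[k] (fun x : ℚ ↦ x ^ m) 0 := by
  rw [altPowSum]
  simpa using sum_neg_one_pow_mul_choose_mul_eq_fwdDiff_iter (fun x : ℚ ↦ x ^ m) k 0

theorem altPowSum_eq_zero_of_lt {m k : ℕ} (h : m < k) : altPowSum m k = 0 := by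
  rw [altPowSum_eq_fwdDiff_iter, fwdDiff_iter_pow_eq_zero_of_lt h, Pi.zero_apply, mul_zero]

theorem altPowSum_succ_succ (m k : ℕ) :
    altPowSum (m + 1) (k + 1) = (k + 1) * (altPowSum m (k + 1) - altPowSum m k) := by
  have hshift : (Δ_[1])^[k] (fun x : ℚ ↦ x ^ m) (0 + 1)
      = (Δ_[1])^[k] (fun x : ℚ ↦ x ^ m) 0 + (Δ_[1])^[k + 1] (fun x : ℚ ↦ x ^ m) 0 := by
    rw [Function.iterate_succ_apply', fwdDiff]
    ring
  simp only [altPowSum_eq_fwdDiff_iter, pow_succ' _ m]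
  rw [fwdDiff_iter_succ_id_mul, hshift]
  ring

/-- The `j`-th backward difference of `t ↦ max(t, 0)^m` at `n`; for `j = m + 1` these are the
Eulerian numbers. -/
def truncPowDiff (m j n : ℕ) : ℚ :=
  ∑ q ∈ range (n + 1), (-1 : ℚ) ^ q * (j.choose q : ℚ) * ((n - q : ℕ) : ℚ) ^ m

theorem truncPowDiff_zero_right {m : ℕ} (hm : m ≠ 0) (j : ℕ) : truncPowDiff m j 0 = 0 := by
  simp [truncPowDiff, hm]

theorem truncPowDiff_succ_succ (m j n : ℕ) :
    truncPowDiff m (j + 1) (n + 1) = truncPowDiff m j (n + 1) - truncPowDiff m j n := by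
  simp only [truncPowDiff, sum_range_succ' _ (n + 1), Nat.choose_succ_succ', Nat.cast_add,
    add_mul, mul_add, sum_add_distrib, Nat.add_sub_add_right, pow_succ, pow_zero, mul_neg,
    mul_one, neg_mul, sum_neg_distrib, Nat.choose_zero_right, Nat.cast_one, tsub_zero, one_mul]
  ring

theorem truncPowDiff_self (m j : ℕ) : truncPowDiff m j j = (-1) ^ j * altPowSum m j := by
  rw [truncPowDiff, sum_range_neg_one_pow_mul_choose_reflect]
  congr 1
  refine sum_congr rfl fun q hq ↦ ?_
  rw [Nat.sub_sub_self (Nat.le_of_lt_succ (mem_range.1 hq))]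

theorem truncPowDiff_eq_sum_range {m : ℕ} (hm : m ≠ 0) (j : ℕ) {n N : ℕ} (h : n < N) :
    truncPowDiff m j n
      = ∑ q ∈ range N, (-1 : ℚ) ^ q * (j.choose q : ℚ) * ((n - q : ℕ) : ℚ) ^ m := by
  refine sum_subset (range_subset_range.2 h) fun q _ hq ↦ ?_
  rw [mem_range, not_lt] at hq
  simp [Nat.sub_eq_zero_of_le (Nat.le_of_succ_le hq), hm]

-- The full `(m + 1)`-th difference of `(t - n)^m` vanishes, and splitting `(t - n)^m` into the
-- truncated powers of `t - n` and `n - t` turns this into the symmetry.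
theorem truncPowDiff_symm {m n : ℕ} (hm : m ≠ 0) (hn : n ≤ m + 1) :
    truncPowDiff m (m + 1) (m + 1 - n) = truncPowDiff m (m + 1) n := by
  open Polynomial in
  have hdeg : ((X - C (n : ℚ)) ^ m).natDegree < m + 1 := by
    rw [natDegree_pow, natDegree_X_sub_C]; omega
  have hzero := sum_neg_one_pow_mul_choose_mul_eval_eq_zero hdeg 0
  simp only [zero_add, eval_pow, eval_sub, eval_X, eval_C, natCast_sub_pow_eq_add _ _ hm, mul_add,
    sum_add_distrib] at hzero
  rw [sum_range_neg_one_pow_mul_choose_reflect] at hzero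
  have hreflected : ∑ q ∈ range (m + 1 + 1), (-1) ^ q * ((m + 1).choose q : ℚ)
      * ((m + 1 - q - n : ℕ) : ℚ) ^ m = truncPowDiff m (m + 1) (m + 1 - n) := by
    simp only [truncPowDiff_eq_sum_range hm _ (by omega : m + 1 - n < m + 1 + 1),
      Nat.sub_right_comm _ _ n]
  have hdirect : ∑ q ∈ range (m + 1 + 1), (-1) ^ q * ((m + 1).choose q : ℚ)
      * ((-1) ^ m * ((n - q : ℕ) : ℚ) ^ m) = (-1) ^ m * truncPowDiff m (m + 1) n := by
    rw [truncPowDiff_eq_sum_range hm _ (by omega : n < m + 1 + 1), mul_sum]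
    exact sum_congr rfl fun _ _ ↦ by ring
  rw [hreflected, hdirect] at hzero
  linear_combination -(-1 : ℚ) ^ m * hzero
    + (truncPowDiff m (m + 1) n - truncPowDiff m (m + 1) (m + 1 - n))
      * neg_one_pow_mul_neg_one_pow (R := ℚ) m

def altTruncPowDiffSum (m j : ℕ) : ℚ :=
  ∑ p ∈ range (j - 1), (-1) ^ (p + 1) * truncPowDiff m j (p + 1)

def weightedAltPowSum (m j : ℕ) : ℚ :=
  ∑ k ∈ Icc 1 (j - 1), 2 ^ (j - 1 - k) * altPowSum m k

theorem altTruncPowDiffSum_succ_succ {m : ℕ} (hm : m ≠ 0) (j : ℕ) :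
    altTruncPowDiffSum m (j + 2) = 2 * altTruncPowDiffSum m (j + 1) + altPowSum m (j + 1) := by
  simp only [altTruncPowDiffSum, Nat.add_sub_cancel, show j + 2 - 1 = j + 1 by omega]
  have hpascal : ∀ p ∈ range (j + 1), (-1 : ℚ) ^ (p + 1) * truncPowDiff m (j + 2) (p + 1)
      = (-1) ^ (p + 1) * truncPowDiff m (j + 1) (p + 1) + (-1) ^ p * truncPowDiff m (j + 1) p :=
    fun p _ ↦ by rw [truncPowDiff_succ_succ m (j + 1)]; ring
  rw [sum_congr rfl hpascal, sum_add_distrib, sum_range_succ, sum_range_succ', truncPowDiff_self,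
    truncPowDiff_zero_right hm]
  linear_combination altPowSum m (j + 1) * neg_one_pow_mul_neg_one_pow (R := ℚ) (j + 1)

theorem weightedAltPowSum_succ_succ (m j : ℕ) :
    weightedAltPowSum m (j + 2) = 2 * weightedAltPowSum m (j + 1) + altPowSum m (j + 1) := by
  simp only [weightedAltPowSum, Nat.add_sub_cancel, show j + 2 - 1 = j + 1 by omega]
  rw [sum_Icc_succ_top (by omega), Nat.sub_self, pow_zero, one_mul, mul_sum]
  congr 1
  refine sum_congr rfl fun k hk ↦ ?_
  rw [Nat.sub_add_comm (mem_Icc.1 hk).2, pow_succ]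
  ring

theorem altTruncPowDiffSum_eq_weightedAltPowSum {m : ℕ} (hm : m ≠ 0) (j : ℕ) :
    altTruncPowDiffSum m j = weightedAltPowSum m j := by
  induction j using Nat.twoStepInduction with
  | zero => rfl
  | one => rfl
  | more j _ ih =>
    rw [altTruncPowDiffSum_succ_succ hm, weightedAltPowSum_succ_succ, ih]

theorem altTruncPowDiffSum_self_eq_zero_of_even {m : ℕ} (hm : m ≠ 0) (he : Even m) :
    altTruncPowDiffSum m (m + 1) = 0 := by
  have hanti : ∀ p ∈ range m,
      (-1 : ℚ) ^ (m - 1 - p + 1) * truncPowDiff m (m + 1) (m - 1 - p + 1)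
        = -((-1) ^ (p + 1) * truncPowDiff m (m + 1) (p + 1)) := by
    intro p hp
    have hpm := mem_range.1 hp
    rw [show m - 1 - p + 1 = m + 1 - (p + 1) by omega, truncPowDiff_symm hm (by omega),
      Nat.add_sub_add_right, neg_one_pow_sub_of_le hpm.le, he.neg_one_pow]
    ring
  have hreflect :=
    sum_range_reflect (fun p ↦ (-1 : ℚ) ^ (p + 1) * truncPowDiff m (m + 1) (p + 1)) m
  rw [sum_congr rfl hanti, sum_neg_distrib] at hreflect
  rw [altTruncPowDiffSum, Nat.add_sub_cancel]
  linarith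

theorem weightedAltPowSum_eq_zero_of_even {m : ℕ} (hm : m ≠ 0) (he : Even m) {j : ℕ}
    (hj : m + 1 ≤ j) : weightedAltPowSum m j = 0 := by
  induction j, hj using Nat.le_induction with
  | base =>
    rw [← altTruncPowDiffSum_eq_weightedAltPowSum hm,
      altTruncPowDiffSum_self_eq_zero_of_even hm he]
  | succ j hj ih =>
    obtain ⟨i, rfl⟩ : ∃ i, j = i + 1 := ⟨j - 1, by omega⟩
    rw [weightedAltPowSum_succ_succ, ih, altPowSum_eq_zero_of_lt (by omega)]
    ring

theorem sum_Icc_mul_altPowSum_sub (m j : ℕ) :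
    ∑ k ∈ Icc 1 j, ((2 : ℚ) ^ j - 2 ^ (j - k)) * (altPowSum m (k + 1) - altPowSum m k)
      = (2 ^ j - 1) * altPowSum m (j + 1) - weightedAltPowSum m (j + 1) := by
  induction j with
  | zero => simp [weightedAltPowSum]
  | succ j ih =>
    have hdouble : ∀ k ∈ Icc 1 j,
        ((2 : ℚ) ^ (j + 1) - 2 ^ (j + 1 - k)) * (altPowSum m (k + 1) - altPowSum m k)
          = 2 * (((2 : ℚ) ^ j - 2 ^ (j - k)) * (altPowSum m (k + 1) - altPowSum m k)) := by
      intro k hk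
      rw [Nat.sub_add_comm (mem_Icc.1 hk).2, pow_succ, pow_succ]
      ring
    rw [sum_Icc_succ_top (by omega), sum_congr rfl hdouble, ← mul_sum, ih,
      weightedAltPowSum_succ_succ, Nat.sub_self, pow_zero]
    ring

theorem chiCoeff_succ_succ (m i : ℕ) :
    chiCoeff (m + 1) (i + 1)
      = (-1) ^ (i - m) * ((2 ^ i - 1) * altPowSum m (i + 1) - weightedAltPowSum m (i + 1)) := by
  rw [← sum_Icc_mul_altPowSum_sub, chiCoeff, Nat.add_sub_add_right, Nat.add_sub_cancel]
  congr 1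
  refine sum_congr rfl fun k _ ↦ ?_
  change _ * altPowSum (m + 1) (k + 1) = _
  rw [altPowSum_succ_succ]
  field_simp

theorem sigmaCoeff_succ (m j : ℕ) :
    sigmaCoeff (m + 1) j = (-1) ^ (j - 1) * altTruncPowDiffSum m j := by
  rw [sigmaCoeff, Nat.add_sub_cancel]
  rfl

/-- Lemma `sigeqchi`: `χ_{l,j} = σ_{l,j}` for `2 ≤ l ≤ j`. -/
theorem chi_eq_sigma (l j : ℕ) (hl : 2 ≤ l) (hj : l ≤ j) :
    chiCoeff l j = sigmaCoeff l j := by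
  obtain ⟨m, rfl⟩ : ∃ m, l = m + 1 := ⟨l - 1, by omega⟩
  obtain ⟨i, rfl⟩ : ∃ i, j = i + 1 := ⟨j - 1, by omega⟩
  have hm : m ≠ 0 := by omega
  rw [chiCoeff_succ_succ, altPowSum_eq_zero_of_lt (by omega), sigmaCoeff_succ,
    altTruncPowDiffSum_eq_weightedAltPowSum hm, Nat.add_sub_cancel]
  rcases Nat.even_or_odd m with he | ho
  · simp [weightedAltPowSum_eq_zero_of_even hm he (by omega : m + 1 ≤ i + 1)]
  · rw [neg_one_pow_sub_of_le (by omega), ho.neg_one_pow]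
    ring
end

section
/- For every odd integer l ≥ 3, one has σ_{l,l} = 0 and χ_{l,l} = 0. -/
open Finset

open Polynomial

lemma fd_mono (n : ℕ) : ∀ e : ℕ, e < n → ∀ x : ℚ,
    ∑ q ∈ range (n + 1), (-1 : ℚ) ^ q * (n.choose q : ℚ) * (x + q) ^ e = 0 := by
  induction n with
  | zero => exact fun e he => absurd he (Nat.not_lt_zero e)
  | succ n ih =>
    intro e he x
    have key : ∑ q ∈ range (n + 2), (-1 : ℚ) ^ q * ((n+1).choose q : ℚ) * (x + q) ^ e
        = ∑ q ∈ range (n + 1), (-1 : ℚ) ^ q * (n.choose q : ℚ) *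
            ((x + q) ^ e - (x + q + 1) ^ e) := by
      have h1 : ∑ q ∈ range (n + 2), (-1 : ℚ) ^ q * ((n+1).choose q : ℚ) * (x + q) ^ e
          = (∑ q ∈ range (n + 1), (-1 : ℚ) ^ (q+1) * ((n+1).choose (q+1) : ℚ) * (x + (q+1 : ℕ)) ^ e)
            + x ^ e := by
        rw [Finset.sum_range_succ' (fun q => (-1 : ℚ) ^ q * ((n+1).choose q : ℚ) * (x + q) ^ e) (n+1)]
        norm_num
      have h2 : ∑ q ∈ range (n + 1), (-1 : ℚ) ^ (q+1) * ((n.choose (q+1)) : ℚ) * (x + (q+1:ℕ)) ^ e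
          = (∑ q ∈ range (n + 2), (-1 : ℚ) ^ q * (n.choose q : ℚ) * (x + q) ^ e) - x ^ e := by
        rw [Finset.sum_range_succ' (fun q => (-1 : ℚ) ^ q * ((n).choose q : ℚ) * (x + q) ^ e) (n+1)]
        rw [Nat.choose_zero_right]
        norm_num
      have h3 : ∑ q ∈ range (n + 2), (-1 : ℚ) ^ q * (n.choose q : ℚ) * (x + q) ^ e
          = ∑ q ∈ range (n + 1), (-1 : ℚ) ^ q * (n.choose q : ℚ) * (x + q) ^ e := by
        rw [Finset.sum_range_succ]
        simp [Nat.choose_succ_self]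
      have h4 : ∀ q ∈ range (n+1), (-1 : ℚ) ^ (q+1) * ((n+1).choose (q+1) : ℚ) * (x + (q+1 : ℕ)) ^ e
          = (-1 : ℚ) ^ (q+1) * ((n.choose q : ℚ)) * (x + (q+1:ℕ)) ^ e
            + (-1 : ℚ) ^ (q+1) * ((n.choose (q+1) : ℚ)) * (x + (q+1:ℕ)) ^ e := by
        intro q _
        have : ((n+1).choose (q+1) : ℚ) = (n.choose q : ℚ) + (n.choose (q+1) : ℚ) := by
          exact_mod_cast congrArg Nat.cast (Nat.choose_succ_succ n q)
        rw [this]; ring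
      rw [h1, Finset.sum_congr rfl h4, Finset.sum_add_distrib, h2, h3]
      have h5 : ∀ q ∈ range (n+1), (-1 : ℚ) ^ q * (n.choose q : ℚ) * ((x + q) ^ e - (x + q + 1) ^ e)
          = (-1 : ℚ) ^ q * (n.choose q : ℚ) * (x + q) ^ e
            + (-1 : ℚ) ^ (q+1) * (n.choose q : ℚ) * (x + (q+1:ℕ)) ^ e := by
        intro q _; push_cast; ring
      rw [Finset.sum_congr rfl h5, Finset.sum_add_distrib]
      ring
    rw [key]
    have expand : ∀ q : ℕ, (x + q) ^ e - (x + q + 1) ^ e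
        = -∑ j ∈ range e, (e.choose j : ℚ) * (x + q) ^ j := by
      intro q
      have hb : (x + q + 1) ^ e = ∑ j ∈ range (e+1), (x+q) ^ j * (e.choose j : ℚ) := by
        have := add_pow (x + (q:ℚ)) 1 e
        simpa using this
      rw [hb, Finset.sum_range_succ, Nat.choose_self]
      have : ∑ j ∈ range e, (x+q) ^ j * (e.choose j : ℚ)
          = ∑ j ∈ range e, (e.choose j : ℚ) * (x + q) ^ j :=
        Finset.sum_congr rfl fun j _ => by ring
      rw [this]
      push_cast
      ring
    calc ∑ q ∈ range (n + 1), (-1 : ℚ) ^ q * (n.choose q : ℚ) * ((x + q) ^ e - (x + q + 1) ^ e)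
        = ∑ q ∈ range (n + 1), ∑ j ∈ range e,
            -((e.choose j : ℚ) * ((-1 : ℚ) ^ q * (n.choose q : ℚ) * (x + q) ^ j)) := by
          apply Finset.sum_congr rfl
          intro q _
          rw [expand q, mul_neg, Finset.mul_sum, ← Finset.sum_neg_distrib]
          exact Finset.sum_congr rfl fun j _ => by ring
      _ = ∑ j ∈ range e, -((e.choose j : ℚ) *
            ∑ q ∈ range (n + 1), (-1 : ℚ) ^ q * (n.choose q : ℚ) * (x + q) ^ j) := by
          rw [Finset.sum_comm]
          apply Finset.sum_congr rfl
          intro j _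
          rw [Finset.mul_sum, ← Finset.sum_neg_distrib]
      _ = 0 := by
          apply Finset.sum_eq_zero
          intro j hj
          rw [ih j (lt_of_lt_of_le (Finset.mem_range.mp hj) (Nat.lt_succ_iff.mp he))]
          simp

lemma fd_poly (n : ℕ) (P : ℚ[X]) (h : P.natDegree < n) (x : ℚ) :
    ∑ q ∈ range (n + 1), (-1 : ℚ) ^ q * (n.choose q : ℚ) * P.eval (x + q) = 0 := by
  have heval : ∀ y : ℚ, P.eval y = ∑ i ∈ range (P.natDegree + 1), P.coeff i * y ^ i := by
    intro y; exact P.eval_eq_sum_range y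
  calc ∑ q ∈ range (n + 1), (-1 : ℚ) ^ q * (n.choose q : ℚ) * P.eval (x + q)
      = ∑ q ∈ range (n + 1), ∑ i ∈ range (P.natDegree + 1),
          P.coeff i * ((-1 : ℚ) ^ q * (n.choose q : ℚ) * (x + q) ^ i) := by
        apply Finset.sum_congr rfl
        intro q _
        rw [heval, Finset.mul_sum]
        exact Finset.sum_congr rfl fun i _ => by ring
    _ = ∑ i ∈ range (P.natDegree + 1), P.coeff i *
          ∑ q ∈ range (n + 1), (-1 : ℚ) ^ q * (n.choose q : ℚ) * (x + q) ^ i := by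
        rw [Finset.sum_comm]
        exact Finset.sum_congr rfl fun i _ => by rw [Finset.mul_sum]
    _ = 0 := by
        apply Finset.sum_eq_zero
        intro i hi
        rw [fd_mono n i (lt_of_le_of_lt (Nat.lt_succ_iff.mp (Finset.mem_range.mp hi)) h) x,
          mul_zero]

lemma exR : ∀ (n : ℕ) (g : ℚ[X]), g.degree ≤ (n : ℕ) →
    ∃ S : ℚ[X], S.degree ≤ (n : ℕ) ∧ S + S.comp (X - C 1) = g := by
  intro n
  induction n with
  | zero =>
    intro g hg
    refine ⟨C (g.coeff 0 / 2), degree_C_le.trans (by norm_num), ?_⟩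
    rw [eq_C_of_degree_le_zero (by exact_mod_cast hg : g.degree ≤ 0)]
    rw [C_comp, ← C_add]
    norm_num
  | succ n ih =>
    intro g hg
    set a := g.coeff (n + 1) with ha
    set g₂ := g - (C (a/2) * X ^ (n+1) + C (a/2) * (X - C 1) ^ (n+1)) with hg₂
    have hmon : ((X - C 1 : ℚ[X]) ^ (n+1)).coeff (n+1) = 1 := by
      have h := (monic_X_sub_C (1:ℚ)).pow (n+1)
      have hdeg : ((X - C 1 : ℚ[X]) ^ (n+1)).natDegree = n + 1 := by
        rw [natDegree_pow, natDegree_X_sub_C, mul_one]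
      have h2 := h.coeff_natDegree
      rwa [hdeg] at h2
    have hdegpow : ((X - C 1 : ℚ[X]) ^ (n+1)).degree ≤ (n+1 : ℕ) := by
      rw [degree_pow, degree_X_sub_C]
      simp
    have hg₂deg : g₂.degree ≤ (n : ℕ) := by
      rw [degree_le_iff_coeff_zero]
      intro m hm
      have hm' : n < m := by exact_mod_cast hm
      rw [hg₂, coeff_sub, coeff_add, coeff_C_mul, coeff_C_mul, coeff_X_pow]
      rcases eq_or_lt_of_le (Nat.succ_le_of_lt hm') with h | h
      · subst h
        rw [hmon, if_pos rfl, ← ha]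
        ring
      · have h1 : g.coeff m = 0 := coeff_eq_zero_of_degree_lt (lt_of_le_of_lt hg (by exact_mod_cast h))
        have h2 : ((X - C 1 : ℚ[X]) ^ (n+1)).coeff m = 0 :=
          coeff_eq_zero_of_degree_lt (lt_of_le_of_lt hdegpow (by exact_mod_cast h))
        rw [h1, h2, if_neg (by omega)]
        ring
    obtain ⟨S', hS'deg, hS'⟩ := ih g₂ hg₂deg
    refine ⟨C (a/2) * X ^ (n+1) + S', ?_, ?_⟩
    · apply (degree_add_le _ _).trans
      apply max_le
      · apply (degree_mul_le _ _).trans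
        calc (C (a/2)).degree + ((X : ℚ[X]) ^ (n+1)).degree ≤ 0 + (n+1 : ℕ) := by
              apply add_le_add degree_C_le
              rw [degree_X_pow]
          _ ≤ (n+1 : ℕ) := by norm_num
      · exact hS'deg.trans (by exact_mod_cast Nat.cast_le.mpr (Nat.le_succ n))
    · rw [add_comp, mul_comp, C_comp, X_pow_comp]
      have : C (a/2) * X ^ (n+1) + S' + (C (a/2) * (X - C 1) ^ (n+1) + S'.comp (X - C 1))
          = (C (a/2) * X ^ (n+1) + C (a/2) * (X - C 1) ^ (n+1)) + (S' + S'.comp (X - C 1)) := by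
        ring
      rw [this, hS', hg₂]
      ring

lemma R_ends (e : ℕ) (he : 1 ≤ e) (heven : Even e) (R : ℚ[X])
    (hrec : ∀ x : ℚ, R.eval x + R.eval (x - 1) = x ^ e) :
    R.eval 0 = 0 ∧ R.eval (-1) = 0 := by
  set D := R - R.comp (C (-1) - X) with hD
  have hDev : ∀ x : ℚ, D.eval x = R.eval x - R.eval (-1 - x) := by
    intro x; simp [hD, eval_comp]
  have hanti : ∀ x : ℚ, D.eval x + D.eval (x - 1) = 0 := by
    intro x
    rw [hDev, hDev]
    have h1 := hrec x
    have h2 := hrec (-x)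
    have hx : (-x : ℚ) ^ e = x ^ e := heven.neg_pow x
    have he2 : (-x : ℚ) - 1 = -1 - x := by ring
    have he3 : (-1 : ℚ) - (x - 1) = -x := by ring
    rw [he2, hx] at h2
    rw [he3]
    linarith
  have hper : ∀ x : ℚ, D.eval (x - 2) = D.eval x := by
    intro x
    have h1 := hanti x
    have h2 := hanti (x - 1)
    have h3 : x - 1 - 1 = x - 2 := by ring
    rw [h3] at h2
    linarith
  have hconst : ∀ k : ℕ, D.eval (-(2 * (k : ℚ))) = D.eval 0 := by
    intro k
    induction k with
    | zero => norm_num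
    | succ k ih =>
      have h := hper (-(2 * (k : ℚ)))
      have h2 : (-(2 * (k:ℚ)) - 2) = -(2 * (((k+1 : ℕ)) : ℚ)) := by push_cast; ring
      rw [h2] at h
      rw [← ih, ← h]
  have hzero : D - C (D.eval 0) = 0 := by
    apply Polynomial.eq_zero_of_infinite_isRoot
    apply Set.infinite_of_injective_forall_mem (f := fun k : ℕ => -(2 * (k : ℚ)))
    · intro a b hab
      simp only at hab
      have : (a : ℚ) = b := by linarith
      exact_mod_cast this
    · intro k
      simp only [Set.mem_setOf_eq, IsRoot, eval_sub, eval_C]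
      rw [hconst k, sub_self]
  have hDconst : ∀ x : ℚ, D.eval x = D.eval 0 := by
    intro x
    have := sub_eq_zero.mp hzero
    rw [this]
    simp
  have hD0 : D.eval 0 = 0 := by
    have h1 := hanti 0
    have h2 := hDconst ((0:ℚ) - 1)
    linarith
  have hsub : R.eval 0 - R.eval (-1) = 0 := by
    have := hDev 0
    rw [hD0] at this
    norm_num at this
    linarith [this]
  have hadd : R.eval 0 + R.eval (-1) = 0 := by
    have := hrec 0
    rw [zero_pow (by omega : e ≠ 0)] at this
    norm_num at this
    linarith [this]
  constructor <;> linarith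

lemma sum_choose_all (m j : ℕ) (h : m ≤ j) :
    ∑ i ∈ range (j + 1), (m.choose i : ℚ) = 2 ^ m := by
  rw [← Finset.sum_subset (Finset.range_subset_range.mpr (by omega) : range (m+1) ⊆ range (j+1))]
  · rw [← Nat.cast_sum, Nat.sum_range_choose]
    push_cast
    ring
  · intro i _ hi
    have hlt : m < i := by
      simp only [Finset.mem_range] at hi
      omega
    exact_mod_cast congrArg Nat.cast (Nat.choose_eq_zero_of_lt hlt)

lemma pascal_sum (n j : ℕ) :
    ∑ i ∈ range (j + 1), ((n+2).choose i : ℚ)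
      = ∑ i ∈ range (j + 1), ((n+1).choose i : ℚ) + ∑ i ∈ range j, ((n+1).choose i : ℚ) := by
  rw [Finset.sum_range_succ' (fun i => ((n+2).choose i : ℚ)) j]
  have h1 : ∀ i ∈ range j, ((n+2).choose (i+1) : ℚ) = ((n+1).choose i : ℚ) + ((n+1).choose (i+1) : ℚ) := by
    intro i _
    exact_mod_cast congrArg Nat.cast (Nat.choose_succ_succ (n+1) i)
  rw [Finset.sum_congr rfl h1, Finset.sum_add_distrib]
  rw [Finset.sum_range_succ' (fun i => ((n+1).choose i : ℚ)) j]
  simp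
  ring

lemma two_pow_sum (n : ℕ) : ∀ j : ℕ,
    ∑ k ∈ Icc j n, (2:ℚ) ^ (n - k) * (k.choose j : ℚ)
      + ∑ i ∈ range (j + 1), ((n+1).choose i : ℚ) = 2 ^ (n + 1) := by
  induction n with
  | zero =>
    intro j
    rcases Nat.eq_zero_or_pos j with hj | hj
    · subst hj
      simp
      norm_num
    · rw [Finset.Icc_eq_empty (by omega), Finset.sum_empty, zero_add,
        sum_choose_all 1 j (by omega)]
  | succ n ih =>
    intro j
    rcases le_or_gt j (n+1) with hj | hj
    · have hpow : ∀ k ∈ Icc j n, (2:ℚ) ^ (n + 1 - k) * (k.choose j : ℚ)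
          = 2 * ((2:ℚ) ^ (n - k) * (k.choose j : ℚ)) := by
        intro k hk
        have hk' : k ≤ n := (Finset.mem_Icc.mp hk).2
        have h2 : n + 1 - k = (n - k) + 1 := by omega
        rw [h2, pow_succ]
        ring
      have key : ∑ k ∈ Icc j (n+1), (2:ℚ) ^ (n + 1 - k) * (k.choose j : ℚ)
          = 2 * (∑ k ∈ Icc j n, (2:ℚ) ^ (n - k) * (k.choose j : ℚ)) + ((n+1).choose j : ℚ) := by
        rw [Finset.sum_Icc_succ_top hj, Finset.sum_congr rfl hpow, ← Finset.mul_sum,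
          Nat.sub_self, pow_zero, one_mul]
      rw [key]
      have hP := pascal_sum n j
      have hih := ih j
      have hsplit : ∑ i ∈ range (j+1), ((n+1).choose i : ℚ)
          = ∑ i ∈ range j, ((n+1).choose i : ℚ) + ((n+1).choose j : ℚ) :=
        Finset.sum_range_succ _ j
      have hpow2 : (2:ℚ) ^ (n + 1 + 1) = 2 * 2 ^ (n + 1) := by ring
      show 2 * (∑ k ∈ Icc j n, (2:ℚ) ^ (n - k) * (k.choose j : ℚ)) + ((n+1).choose j : ℚ)
          + ∑ i ∈ range (j+1), ((n+2).choose i : ℚ) = 2 ^ (n + 1 + 1)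
      rw [hP, hpow2]
      linarith [hih, hsplit]
    · rw [Finset.Icc_eq_empty (by omega), Finset.sum_empty, zero_add,
        sum_choose_all (n+2) j (by omega)]

noncomputable def Tl (l m : ℕ) : ℚ := ∑ i ∈ Icc m l, (l.choose i : ℚ)

lemma Tl_top (l m : ℕ) (h : l < m) : Tl l m = 0 := by
  rw [Tl, Finset.Icc_eq_empty (by omega), Finset.sum_empty]

lemma Tl_succ (l m : ℕ) (h : m ≤ l) : Tl l m = (l.choose m : ℚ) + Tl l (m + 1) := by
  rw [Tl, Tl, ← Finset.Ico_add_one_right_eq_Icc, ← Finset.Ico_add_one_right_eq_Icc,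
    Finset.sum_eq_sum_Ico_succ_bot (by omega)]

lemma key1 (l : ℕ) (R : ℚ[X]) (hdeg : R.natDegree < l) :
    ∑ i ∈ range (l + 1), (-1:ℚ)^i * (l.choose i : ℚ) * R.eval (i : ℚ) = 0 := by
  have h := fd_poly l R hdeg 0
  rw [← h]
  exact Finset.sum_congr rfl fun i _ => by norm_num

lemma key2 (l : ℕ) (R : ℚ[X]) (hdeg : R.natDegree < l) (hRm1 : R.eval (-1) = 0) :
    ∑ i ∈ range (l + 1), (-1:ℚ)^i * (l.choose (i+1) : ℚ) * R.eval (i : ℚ) = 0 := by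
  have h := fd_poly l R hdeg (-1)
  rw [Finset.sum_range_succ' (fun q => (-1:ℚ)^q * (l.choose q : ℚ) * R.eval (-1 + (q:ℚ))) l] at h
  have h0 : (-1:ℚ)^0 * (l.choose 0 : ℚ) * R.eval (-1 + ((0:ℕ):ℚ)) = 0 := by
    norm_num [hRm1]
  rw [h0, add_zero] at h
  have hcongr : ∀ i ∈ range l, (-1:ℚ)^(i+1) * (l.choose (i+1) : ℚ) * R.eval (-1 + ((i+1 : ℕ) : ℚ))
      = -((-1:ℚ)^i * (l.choose (i+1) : ℚ) * R.eval (i : ℚ)) := by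
    intro i _
    have hc : (-1 : ℚ) + ((i+1 : ℕ) : ℚ) = (i : ℚ) := by push_cast; ring
    rw [hc, pow_succ]
    ring
  rw [Finset.sum_congr rfl hcongr, Finset.sum_neg_distrib, neg_eq_zero] at h
  rw [Finset.sum_range_succ, Nat.choose_eq_zero_of_lt (by omega : l < l + 1), Nat.cast_zero,
    mul_zero, zero_mul, add_zero]
  exact h

lemma L1 (l e : ℕ) (R : ℚ[X]) (hdeg : R.natDegree < l)
    (hrec : ∀ x : ℚ, R.eval x + R.eval (x - 1) = x ^ e)
    (hR0 : R.eval 0 = 0) :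
    ∑ j ∈ range l, (-1:ℚ)^j * ((j+1 : ℕ) : ℚ)^e * Tl l (j+1) = 0 := by
  have hsplit : ∀ j ∈ range l, (-1:ℚ)^j * ((j+1 : ℕ) : ℚ)^e * Tl l (j+1)
      = (-1:ℚ)^j * Tl l (j+1) * R.eval ((j+1 : ℕ) : ℚ)
        + (-1:ℚ)^j * Tl l (j+1) * R.eval (j : ℚ) := by
    intro j _
    have h := hrec ((j+1 : ℕ) : ℚ)
    have h2 : ((j+1 : ℕ) : ℚ) - 1 = (j : ℚ) := by push_cast; ring
    rw [h2] at h
    rw [← h]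
    ring
  rw [Finset.sum_congr rfl hsplit, Finset.sum_add_distrib]
  have hA : ∑ j ∈ range l, (-1:ℚ)^j * Tl l (j+1) * R.eval ((j+1 : ℕ) : ℚ)
      = -∑ i ∈ range (l+1), (-1:ℚ)^i * Tl l i * R.eval (i : ℚ) := by
    rw [Finset.sum_range_succ' (fun i => (-1:ℚ)^i * Tl l i * R.eval (i : ℚ)) l]
    rw [show (-1:ℚ)^0 * Tl l 0 * R.eval ((0:ℕ) : ℚ) = 0 from by norm_num [hR0]]
    rw [add_zero, ← Finset.sum_neg_distrib]
    apply Finset.sum_congr rfl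
    intro j _
    rw [pow_succ]
    ring
  have hB : ∑ j ∈ range l, (-1:ℚ)^j * Tl l (j+1) * R.eval (j : ℚ)
      = ∑ j ∈ range (l+1), (-1:ℚ)^j * Tl l (j+1) * R.eval (j : ℚ) := by
    rw [Finset.sum_range_succ, Tl_top l (l+1) (by omega)]
    ring
  rw [hA, hB, neg_add_eq_sub, ← Finset.sum_sub_distrib]
  have hfin : ∀ j ∈ range (l+1),
      (-1:ℚ)^j * Tl l (j+1) * R.eval (j : ℚ) - (-1:ℚ)^j * Tl l j * R.eval (j : ℚ)
      = -((-1:ℚ)^j * (l.choose j : ℚ) * R.eval (j : ℚ)) := by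
    intro j hj
    have hj' : j ≤ l := by
      have := Finset.mem_range.mp hj
      omega
    rw [Tl_succ l j hj']
    ring
  rw [Finset.sum_congr rfl hfin, Finset.sum_neg_distrib, key1 l R hdeg, neg_zero]

lemma L2 (l e : ℕ) (hl : 1 ≤ l) (R : ℚ[X]) (hdeg : R.natDegree < l)
    (hrec : ∀ x : ℚ, R.eval x + R.eval (x - 1) = x ^ e)
    (hR0 : R.eval 0 = 0) (hRm1 : R.eval (-1) = 0) :
    ∑ r ∈ range l, (-1:ℚ)^r * (r : ℚ)^e * Tl l (r+1) = 0 := by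
  obtain ⟨L, rfl⟩ : ∃ L, l = L + 1 := ⟨l - 1, by omega⟩
  have hsplit : ∀ r ∈ range (L+1), (-1:ℚ)^r * (r : ℚ)^e * Tl (L+1) (r+1)
      = (-1:ℚ)^r * Tl (L+1) (r+1) * R.eval (r : ℚ)
        + (-1:ℚ)^r * Tl (L+1) (r+1) * R.eval ((r:ℚ) - 1) := by
    intro r _
    rw [← hrec (r:ℚ)]
    ring
  rw [Finset.sum_congr rfl hsplit, Finset.sum_add_distrib]
  have hA : ∑ r ∈ range (L+1), (-1:ℚ)^r * Tl (L+1) (r+1) * R.eval (r : ℚ)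
      = ∑ r ∈ range (L+2), (-1:ℚ)^r * Tl (L+1) (r+1) * R.eval (r : ℚ) := by
    rw [Finset.sum_range_succ _ (L+1), Tl_top (L+1) (L+1+1) (by omega)]
    ring
  have hB : ∑ r ∈ range (L+1), (-1:ℚ)^r * Tl (L+1) (r+1) * R.eval ((r:ℚ)-1)
      = -∑ i ∈ range (L+2), (-1:ℚ)^i * Tl (L+1) (i+2) * R.eval (i : ℚ) := by
    rw [Finset.sum_range_succ' (fun r => (-1:ℚ)^r * Tl (L+1) (r+1) * R.eval ((r:ℚ)-1)) L]
    rw [show (-1:ℚ)^0 * Tl (L+1) (0+1) * R.eval (((0:ℕ):ℚ)-1) = 0 from by norm_num [hRm1]]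
    rw [add_zero,
      Finset.sum_range_succ (fun i => (-1:ℚ)^i * Tl (L+1) (i+2) * R.eval (i : ℚ)) (L+1),
      Finset.sum_range_succ (fun i => (-1:ℚ)^i * Tl (L+1) (i+2) * R.eval (i : ℚ)) L]
    rw [Tl_top (L+1) (L+1+2) (by omega), Tl_top (L+1) (L+2) (by omega)]
    simp only [mul_zero, zero_mul, add_zero]
    rw [← Finset.sum_neg_distrib]
    apply Finset.sum_congr rfl
    intro i _
    have hc : ((i+1:ℕ):ℚ) - 1 = (i:ℚ) := by push_cast; ring
    rw [hc, pow_succ]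
    ring
  rw [hA, hB, ← sub_eq_add_neg, ← Finset.sum_sub_distrib]
  have hfin : ∀ i ∈ range (L+2),
      (-1:ℚ)^i * Tl (L+1) (i+1) * R.eval (i : ℚ) - (-1:ℚ)^i * Tl (L+1) (i+2) * R.eval (i : ℚ)
      = (-1:ℚ)^i * (((L+1).choose (i+1)) : ℚ) * R.eval (i : ℚ) := by
    intro i hi
    rcases le_or_gt (i+1) (L+1) with h | h
    · rw [Tl_succ (L+1) (i+1) h]
      ring
    · rw [Tl_top (L+1) (i+1) h, Tl_top (L+1) (i+2) (by omega),
        Nat.choose_eq_zero_of_lt (by omega : L + 1 < i + 1), Nat.cast_zero]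
      ring
  rw [Finset.sum_congr rfl hfin]
  exact key2 (L+1) R hdeg hRm1

lemma V_eq_T (l r : ℕ) (hr : r ≤ l) :
    ∑ i ∈ range (l - r), ((l.choose i) : ℚ) = Tl l (r+1) := by
  rw [Tl, ← Finset.Ico_add_one_right_eq_Icc, Finset.sum_Ico_eq_sum_range]
  have h1 : l + 1 - (r + 1) = l - r := by omega
  rw [h1, ← Finset.sum_range_reflect (fun i => (l.choose (r + 1 + i) : ℚ)) (l - r)]
  apply Finset.sum_congr rfl
  intro i hi
  have hi' := Finset.mem_range.mp hi
  have h2 : r + 1 + (l - r - 1 - i) = l - i := by omega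
  rw [h2]
  exact_mod_cast congrArg Nat.cast (Nat.choose_symm (show i ≤ l by omega)).symm

lemma tri_swap (m : ℕ) (hm : 1 ≤ m) (f : ℕ → ℕ → ℚ) :
    ∑ p ∈ range m, ∑ r ∈ range (p + 2), f p r
      = ∑ r ∈ range (m + 1), ∑ p ∈ Icc (r - 1) (m - 1), f p r := by
  have step1 : ∀ p ∈ range m, ∑ r ∈ range (p + 2), f p r
      = ∑ r ∈ range (m + 1), if r < p + 2 then f p r else 0 := by
    intro p hp
    have hss : (range (m + 1)).filter (fun r => r < p + 2) = range (p + 2) := by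
      ext r
      simp only [Finset.mem_filter, Finset.mem_range]
      have := Finset.mem_range.mp hp
      omega
    rw [← Finset.sum_filter, hss]
  rw [Finset.sum_congr rfl step1, Finset.sum_comm]
  apply Finset.sum_congr rfl
  intro r _
  have hfil : (range m).filter (fun p => r < p + 2) = Icc (r - 1) (m - 1) := by
    ext p
    simp only [Finset.mem_filter, Finset.mem_range, Finset.mem_Icc]
    omega
  rw [← Finset.sum_filter, hfil]

lemma sigma_red (l : ℕ) (hl : 3 ≤ l) (hodd : Odd l) :
    sigmaCoeff l l = ∑ r ∈ range l, (-1:ℚ)^r * (r : ℚ)^(l-1) * Tl l (r+1) := by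
  have heven : Even (l - 1) := Nat.Odd.sub_odd hodd odd_one
  rw [sigmaCoeff, heven.neg_one_pow, one_mul]
  have hrefl : ∀ p ∈ range (l - 1), (-1 : ℚ) ^ (p + 1) *
      ∑ q ∈ Finset.range (p + 2), (-1 : ℚ) ^ q * (l.choose q : ℚ) * ((p + 1 - q : ℕ) : ℚ) ^ (l - 1)
      = ∑ r ∈ range (p + 2), (-1 : ℚ) ^ r * (l.choose (p + 1 - r) : ℚ) * (r : ℚ) ^ (l - 1) := by
    intro p _
    rw [← Finset.sum_range_reflect
      (fun q => (-1 : ℚ) ^ q * (l.choose q : ℚ) * ((p + 1 - q : ℕ) : ℚ) ^ (l - 1)) (p + 2),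
      Finset.mul_sum]
    apply Finset.sum_congr rfl
    intro r hr
    have hr' := Finset.mem_range.mp hr
    obtain ⟨d, hd⟩ : ∃ d, p + 1 = r + d := ⟨p + 1 - r, by omega⟩
    have h1 : p + 2 - 1 - r = d := by omega
    rw [h1]
    have h2 : p + 1 - d = r := by omega
    rw [h2]
    have h3 : (-1 : ℚ) ^ (p + 1) = (-1 : ℚ) ^ r * (-1 : ℚ) ^ d := by
      rw [← pow_add, ← hd]
    have h4 : p + 1 - r = d := by omega
    rw [h3, h4]
    have h6 : ((-1 : ℚ) ^ d) * ((-1 : ℚ) ^ d) = 1 := by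
      rw [← pow_add]
      exact Even.neg_one_pow ⟨d, rfl⟩
    linear_combination ((-1:ℚ)^r * (l.choose d : ℚ) * (r:ℚ)^(l-1)) * h6
  rw [Finset.sum_congr rfl hrefl]
  rw [tri_swap (l - 1) (by omega) (fun p r => (-1 : ℚ) ^ r * (l.choose (p + 1 - r) : ℚ) * (r : ℚ) ^ (l - 1))]
  have hl1 : l - 1 + 1 = l := by omega
  rw [hl1]
  apply Finset.sum_congr rfl
  intro r hr
  have hr' := Finset.mem_range.mp hr
  rcases Nat.eq_zero_or_pos r with h0 | h0
  · subst h0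
    have : ((0 : ℕ) : ℚ) ^ (l - 1) = 0 := by
      rw [Nat.cast_zero, zero_pow (by omega : l - 1 ≠ 0)]
    rw [this]
    simp [Finset.mul_sum]
  · have hcomm : ∀ p ∈ Icc (r-1) (l-1-1), (-1:ℚ)^r * ((l.choose (p+1-r)) : ℚ) * (r:ℚ)^(l-1)
        = ((-1:ℚ)^r * (r:ℚ)^(l-1)) * ((l.choose (p+1-r)) : ℚ) := fun p _ => by ring
    rw [Finset.sum_congr rfl hcomm, ← Finset.mul_sum]
    have hinner : ∑ p ∈ Icc (r - 1) (l - 1 - 1), ((l.choose (p + 1 - r)) : ℚ) = Tl l (r + 1) := by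
      rw [← Finset.Ico_add_one_right_eq_Icc, Finset.sum_Ico_eq_sum_range]
      have h1 : l - 1 - 1 + 1 - (r - 1) = l - r := by omega
      rw [h1, ← V_eq_T l r (by omega)]
      apply Finset.sum_congr rfl
      intro i _
      have : r - 1 + i + 1 - r = i := by omega
      rw [this]
    rw [hinner]

lemma VT (l m : ℕ) (h : m ≤ l + 1) :
    ∑ i ∈ range m, (l.choose i : ℚ) + Tl l m = 2 ^ l := by
  rw [Tl, ← Finset.Ico_add_one_right_eq_Icc, Finset.range_eq_Ico,
    Finset.sum_Ico_consecutive _ (Nat.zero_le m) h, ← Finset.range_eq_Ico,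
    ← Nat.cast_sum, Nat.sum_range_choose]
  norm_num

lemma tri_swap1 (m : ℕ) (hm : 1 ≤ m) (f : ℕ → ℕ → ℚ) :
    ∑ k ∈ range m, ∑ j ∈ range (k + 1), f k j
      = ∑ j ∈ range m, ∑ k ∈ Icc j (m - 1), f k j := by
  have step1 : ∀ k ∈ range m, ∑ j ∈ range (k + 1), f k j
      = ∑ j ∈ range m, if j < k + 1 then f k j else 0 := by
    intro k hk
    have hss : (range m).filter (fun j => j < k + 1) = range (k + 1) := by
      ext j
      simp only [Finset.mem_filter, Finset.mem_range]
      have := Finset.mem_range.mp hk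
      omega
    rw [← Finset.sum_filter, hss]
  rw [Finset.sum_congr rfl step1, Finset.sum_comm]
  apply Finset.sum_congr rfl
  intro j _
  have hfil : (range m).filter (fun k => j < k + 1) = Icc j (m - 1) := by
    ext k
    simp only [Finset.mem_filter, Finset.mem_range, Finset.mem_Icc]
    omega
  rw [← Finset.sum_filter, hfil]

lemma chi_red (l : ℕ) (hl : 3 ≤ l) :
    chiCoeff l l = ∑ j ∈ range l, (-1:ℚ)^(j+1) * ((j+1 : ℕ) : ℚ)^(l-1) *
      (2^(l-1) * (l.choose (j+1) : ℚ) - Tl l (j+1)) := by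
  rw [chiCoeff, Nat.sub_self, pow_zero, one_mul]
  -- extend Icc 1 (l-1) to range l
  have hext : ∑ k ∈ Finset.Icc 1 (l - 1),
      ((2 ^ (l - 1) - 2 ^ (l - 1 - k) : ℚ) / ((k : ℚ) + 1)) *
        ∑ m ∈ Finset.range (k + 2), (-1 : ℚ) ^ m * ((k + 1).choose m : ℚ) * (m : ℚ) ^ l
      = ∑ k ∈ range l,
      ((2 ^ (l - 1) - 2 ^ (l - 1 - k) : ℚ) / ((k : ℚ) + 1)) *
        ∑ m ∈ Finset.range (k + 2), (-1 : ℚ) ^ m * ((k + 1).choose m : ℚ) * (m : ℚ) ^ l := by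
    rw [Finset.range_eq_Ico,
      Finset.sum_eq_sum_Ico_succ_bot (by omega : 0 < l)]
    have h0 : ((2 ^ (l - 1) - 2 ^ (l - 1 - 0) : ℚ) / ((0 : ℕ) + 1 : ℚ)) = 0 := by
      norm_num
    rw [h0]
    have hIcc : Finset.Ico 1 l = Finset.Icc 1 (l - 1) := by
      rw [← Finset.Ico_add_one_right_eq_Icc]
      congr 1
      omega
    rw [hIcc]
    simp
  rw [hext]
  -- rewrite each term
  have hterm : ∀ k ∈ range l,
      ((2 ^ (l - 1) - 2 ^ (l - 1 - k) : ℚ) / ((k : ℚ) + 1)) *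
        ∑ m ∈ Finset.range (k + 2), (-1 : ℚ) ^ m * ((k + 1).choose m : ℚ) * (m : ℚ) ^ l
      = ∑ j ∈ range (k + 1), (-1:ℚ)^(j+1) * ((j+1 : ℕ) : ℚ)^(l-1) *
          ((2 ^ (l - 1) - 2 ^ (l - 1 - k) : ℚ) * (k.choose j : ℚ)) := by
    intro k _
    rw [Finset.sum_range_succ'
      (fun m => (-1 : ℚ) ^ m * ((k + 1).choose m : ℚ) * (m : ℚ) ^ l) (k+1)]
    have hz : (-1 : ℚ) ^ 0 * ((k + 1).choose 0 : ℚ) * ((0:ℕ) : ℚ) ^ l = 0 := by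
      rw [Nat.cast_zero, zero_pow (by omega : l ≠ 0)]
      ring
    rw [hz, add_zero, Finset.mul_sum]
    apply Finset.sum_congr rfl
    intro j _
    have hck : ((k:ℚ) + 1) * (k.choose j : ℚ) = ((k+1).choose (j+1) : ℚ) * ((j:ℚ) + 1) := by
      exact_mod_cast congrArg Nat.cast (Nat.add_one_mul_choose_eq k j)
    have hpow : ((j+1 : ℕ) : ℚ) ^ l = ((j+1 : ℕ) : ℚ) ^ (l-1) * ((j:ℚ) + 1) := by
      have : l = (l - 1) + 1 := by omega
      rw [this]
      push_cast
      ring_nf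
    have hk0 : ((k:ℚ) + 1) ≠ 0 := by positivity
    rw [hpow, div_mul_eq_mul_div, div_eq_iff hk0]
    push_cast at hck ⊢
    linear_combination (-((2:ℚ) ^ (l - 1) - 2 ^ (l - 1 - k)) * (-1:ℚ)^(j+1) * ((j:ℚ)+1)^(l-1)) * hck
  rw [Finset.sum_congr rfl hterm]
  rw [tri_swap1 l (by omega) (fun k j => (-1:ℚ)^(j+1) * ((j+1 : ℕ) : ℚ)^(l-1) *
      ((2 ^ (l - 1) - 2 ^ (l - 1 - k) : ℚ) * (k.choose j : ℚ)))]
  apply Finset.sum_congr rfl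
  intro j hj
  have hj' := Finset.mem_range.mp hj
  have hcomm : ∀ k ∈ Icc j (l-1), (-1:ℚ)^(j+1) * ((j+1 : ℕ) : ℚ)^(l-1) *
      ((2 ^ (l - 1) - 2 ^ (l - 1 - k) : ℚ) * (k.choose j : ℚ))
      = ((-1:ℚ)^(j+1) * ((j+1 : ℕ) : ℚ)^(l-1)) *
        ((2 ^ (l - 1) - 2 ^ (l - 1 - k) : ℚ) * (k.choose j : ℚ)) := fun k _ => by ring
  rw [Finset.sum_congr rfl hcomm, ← Finset.mul_sum]
  congr 1
  -- ∑_{k∈Icc j (l-1)} (2^{l-1} - 2^{l-1-k}) C(k,j) = 2^{l-1} C(l,j+1) - Tl l (j+1)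
  have hsplit : ∀ k ∈ Icc j (l-1), (2 ^ (l - 1) - 2 ^ (l - 1 - k) : ℚ) * (k.choose j : ℚ)
      = 2 ^ (l-1) * (k.choose j : ℚ) - (2:ℚ) ^ (l - 1 - k) * (k.choose j : ℚ) :=
    fun k _ => by ring
  rw [Finset.sum_congr rfl hsplit, Finset.sum_sub_distrib, ← Finset.mul_sum]
  have h1 : ∑ k ∈ Icc j (l-1), (k.choose j : ℚ) = (l.choose (j+1) : ℚ) := by
    rw [← Nat.cast_sum, Nat.sum_Icc_choose]
    congr 2
    omega
  have h2 : ∑ k ∈ Icc j (l-1), (2:ℚ) ^ (l - 1 - k) * (k.choose j : ℚ) = Tl l (j+1) := by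
    have ht := two_pow_sum (l-1) j
    have hVT := VT l (j+1) (by omega)
    have hl1 : l - 1 + 1 = l := by omega
    rw [hl1] at ht
    linarith
  rw [h1, h2]

/-- For every odd `l ≥ 3`, `σ_{l,l} = 0` and `χ_{l,l} = 0`. -/
theorem sigma_chi_ll_vanish_odd (l : ℕ) (hl : 3 ≤ l) (hodd : Odd l) :
    sigmaCoeff l l = 0 ∧ chiCoeff l l = 0 := by
  have he1 : 1 ≤ l - 1 := by omega
  have heven : Even (l - 1) := Nat.Odd.sub_odd hodd odd_one
  obtain ⟨R, hRdeg, hRsum⟩ := exR (l-1) (X ^ (l-1) : ℚ[X]) (by rw [degree_X_pow])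
  have hrec : ∀ x : ℚ, R.eval x + R.eval (x - 1) = x ^ (l-1) := by
    intro x
    have := congrArg (Polynomial.eval x) hRsum
    simpa [eval_comp] using this
  have hdeg' : R.natDegree < l := by
    have := Polynomial.natDegree_le_iff_degree_le.mpr hRdeg
    omega
  obtain ⟨hR0, hRm1⟩ := R_ends (l-1) he1 heven R hrec
  constructor
  · rw [sigma_red l hl hodd]
    exact L2 l (l-1) (by omega) R hdeg' hrec hR0 hRm1
  · rw [chi_red l hl]
    have hsplit : ∀ j ∈ range l, (-1:ℚ)^(j+1) * ((j+1 : ℕ) : ℚ)^(l-1) *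
        (2^(l-1) * (l.choose (j+1) : ℚ) - Tl l (j+1))
        = (-2^(l-1)) * ((-1:ℚ)^j * (l.choose (j+1) : ℚ) * ((0:ℚ) + ((j+1:ℕ):ℚ))^(l-1))
          + (-1:ℚ)^j * ((j+1 : ℕ) : ℚ)^(l-1) * Tl l (j+1) := by
      intro j _
      rw [pow_succ]
      push_cast
      ring
    rw [Finset.sum_congr rfl hsplit, Finset.sum_add_distrib, ← Finset.mul_sum]
    rw [L1 l (l-1) R hdeg' hrec hR0]
    have hmono := fd_mono l (l-1) (by omega) 0
    rw [Finset.sum_range_succ' (fun q => (-1:ℚ)^q * (l.choose q : ℚ) * ((0:ℚ) + q)^(l-1)) l]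
      at hmono
    have hz : (-1:ℚ)^0 * (l.choose 0 : ℚ) * ((0:ℚ) + ((0:ℕ):ℚ))^(l-1) = 0 := by
      norm_num [zero_pow (show l - 1 ≠ 0 by omega)]
    rw [hz, add_zero] at hmono
    have hfin : ∑ j ∈ range l,
        (-1:ℚ)^j * (l.choose (j+1) : ℚ) * ((0:ℚ) + ((j+1:ℕ):ℚ))^(l-1) = 0 := by
      have hneg : ∀ j ∈ range l,
          (-1:ℚ)^(j+1) * (l.choose (j+1) : ℚ) * ((0:ℚ) + ((j+1:ℕ):ℚ))^(l-1)
          = -((-1:ℚ)^j * (l.choose (j+1) : ℚ) * ((0:ℚ) + ((j+1:ℕ):ℚ))^(l-1)) := by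
        intro j _
        rw [pow_succ]
        ring
      rw [Finset.sum_congr rfl hneg, Finset.sum_neg_distrib, neg_eq_zero] at hmono
      exact hmono
    rw [hfin]
    ring
end

section
/- For all natural numbers p and k, Σ_{n=0}^{p} 2^{p−n}·C(n,k) = Σ_{l=k+1}^{p+1} C(p+1,l). -/
open Finset

/-- Lemma `binrmq`: for all natural numbers `p` and `k`,
`Σ_{n=0}^{p} 2^{p-n} C(n,k) = Σ_{l=k+1}^{p+1} C(p+1,l)`. -/
theorem binrmq (p k : ℕ) :
    ∑ n ∈ Finset.range (p + 1), 2 ^ (p - n) * n.choose k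
      = ∑ l ∈ Finset.Icc (k + 1) (p + 1), (p + 1).choose l := by
  induction p with
  | zero =>
    rcases k with _ | k
    · simp
    · rw [Finset.Icc_eq_empty (by omega)]
      simp [Nat.choose_eq_zero_of_lt]
  | succ p ih =>
    have hL : ∑ n ∈ Finset.range (p + 2), 2 ^ (p + 1 - n) * n.choose k
        = 2 * (∑ n ∈ Finset.range (p + 1), 2 ^ (p - n) * n.choose k)
          + (p + 1).choose k := by
      rw [Finset.sum_range_succ, Finset.mul_sum]
      simp only [Nat.sub_self, pow_zero, one_mul]
      congr 1
      apply Finset.sum_congr rfl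
      intro n hn
      have hn' : n ≤ p := Nat.lt_succ_iff.mp (Finset.mem_range.mp hn)
      rw [← mul_assoc, ← pow_succ']
      congr 2
      omega
    have hR : ∑ l ∈ Finset.Icc (k + 1) (p + 2), (p + 2).choose l
        = 2 * (∑ l ∈ Finset.Icc (k + 1) (p + 1), (p + 1).choose l)
          + (p + 1).choose k := by
      have pascal : ∀ l ∈ Finset.Icc (k + 1) (p + 2),
          (p + 2).choose l = (p + 1).choose (l - 1) + (p + 1).choose l := by
        intro l hl
        have hl1 : 1 ≤ l := le_trans (Nat.le_add_left 1 k) (Finset.mem_Icc.mp hl).1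
        obtain ⟨m, rfl⟩ := Nat.exists_eq_add_of_le hl1
        rw [Nat.add_comm 1 m]
        simp [Nat.choose_succ_succ, Nat.add_comm]
      rw [Finset.sum_congr rfl pascal, Finset.sum_add_distrib]
      have h1 : ∑ l ∈ Finset.Icc (k + 1) (p + 2), (p + 1).choose (l - 1)
          = ∑ l ∈ Finset.Icc k (p + 1), (p + 1).choose l := by
        rw [show (Finset.Icc (k+1) (p+2)) = Finset.map ⟨Nat.succ, Nat.succ_injective⟩ (Finset.Icc k (p+1)) by
          ext x
          simp only [Finset.mem_map, Finset.mem_Icc, Function.Embedding.coeFn_mk]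
          constructor
          · rintro ⟨hx1, hx2⟩; exact ⟨x - 1, ⟨by omega, by omega⟩, by omega⟩
          · rintro ⟨a, ⟨ha1, ha2⟩, rfl⟩; omega]
        rw [Finset.sum_map]
        simp
      have h2 : ∑ l ∈ Finset.Icc (k + 1) (p + 2), (p + 1).choose l
          = ∑ l ∈ Finset.Icc (k + 1) (p + 1), (p + 1).choose l := by
        rcases le_or_gt (k + 1) (p + 2) with h | h
        · rw [Finset.sum_Icc_succ_top h]
          simp [Nat.choose_eq_zero_of_lt (by omega : p + 1 < p + 2)]
        · rw [Finset.Icc_eq_empty (by omega), Finset.Icc_eq_empty (by omega)]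
      have h3 : ∑ l ∈ Finset.Icc k (p + 1), (p + 1).choose l
          = (p + 1).choose k + ∑ l ∈ Finset.Icc (k + 1) (p + 1), (p + 1).choose l := by
        rcases le_or_gt k (p + 1) with h | h
        · rw [Finset.Icc_eq_cons_Ioc h, Finset.sum_cons, Finset.Icc_add_one_left_eq_Ioc]
        · rw [Finset.Icc_eq_empty (by omega), Finset.Icc_eq_empty (by omega),
            Nat.choose_eq_zero_of_lt h]
          simp
      rw [h1, h2, h3]
      ring
    show ∑ n ∈ Finset.range (p + 2), 2 ^ (p + 1 - n) * n.choose k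
        = ∑ l ∈ Finset.Icc (k + 1) (p + 2), (p + 2).choose l
    omega
end
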